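/- arXiv:2506.01509 — 4 statements merged into one kernel-verified Lean document; each statement's English description precedes it below -/
import Mathlib

section
/- Every extreme point of the polyhedron Q (the feasible region of the dual of the auxiliary maximum flow LP) has all coordinates integral. -/
/-- A finite graph: a finite vertex set and a finite set of (oriented representatives of) edges. -/
structure FinGraph (α : Type*) where
  verts : Finset α
  edges : Finset (α × α)

namespace FinGraph

variable {α : Type*}

/-- A matching: a set of edges of `G` that are pairwise vertex-disjoint. -/
def IsMatching (G : FinGraph α) (M : Finset (α × α)) : Prop :=
  M ⊆ G.edges ∧ ∀ e ∈ M, ∀ f ∈ M, e ≠ f →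
    e.1 ≠ f.1 ∧ e.1 ≠ f.2 ∧ e.2 ≠ f.1 ∧ e.2 ≠ f.2

open Classical in
/-- `ν(G)`: the maximum cardinality of a matching of `G`. -/
noncomputable def nu (G : FinGraph α) : ℕ :=
  (G.edges.powerset.filter fun M => G.IsMatching M).sup Finset.card

/-- Well-formedness: edges join two distinct vertices of the graph. -/
def WF (G : FinGraph α) : Prop :=
  ∀ e ∈ G.edges, e.1 ∈ G.verts ∧ e.2 ∈ G.verts ∧ e.1 ≠ e.2

/-- `G` is bipartite with parts `V1`, `V2` (edges oriented from `V1` to `V2`). -/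
def Bipartition [DecidableEq α] (G : FinGraph α) (V1 V2 : Finset α) : Prop :=
  G.verts ⊆ V1 ∪ V2 ∧ ∀ e ∈ G.edges, e.1 ∈ V1 ∧ e.2 ∈ V2

/-- The core of the assignment game on `G`: minimum fractional vertex covers of value `ν(G)`. -/
noncomputable def core (G : FinGraph α) : Set (α → ℝ) :=
  {y | (∀ v ∈ G.verts, 0 ≤ y v) ∧ (∀ e ∈ G.edges, 1 ≤ y e.1 + y e.2) ∧
    ∑ v ∈ G.verts, y v = (G.nu : ℝ)}

/-- The subgraph of `G` induced by the vertex set `U`. -/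
def induce [DecidableEq α] (G : FinGraph α) (U : Finset α) : FinGraph α :=
  ⟨G.verts ∩ U, G.edges.filter fun e => e.1 ∈ U ∧ e.2 ∈ U⟩

end FinGraph

/-- A real number is integral if it is an integer. -/
def IntegralReal (x : ℝ) : Prop := ∃ n : ℤ, x = (n : ℝ)

open FinGraph

variable {α σ : Type*}

/-- A point of the two-stage LP: first-stage allocation `y`, second-stage allocations `y^S`,
and deviation variables `δ^S`, `d^S`. -/
abbrev TwoStagePt (α σ : Type*) : Type _ :=
  (α → ℝ) × (σ → α → ℝ) × (σ → α → ℝ) × (σ → α → ℝ)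

/-- The relaxed feasible region `D` of the two-stage LP (no matching-number equalities). -/
def regionD [DecidableEq α] (G0 : FinGraph α) (G : σ → FinGraph α) :
    Set (TwoStagePt α σ) :=
  {p | (∀ v ∈ G0.verts, 0 ≤ p.1 v) ∧
       (∀ e ∈ G0.edges, 1 ≤ p.1 e.1 + p.1 e.2) ∧
       (∀ s : σ, (∀ v ∈ (G s).verts, 0 ≤ p.2.1 s v) ∧
         (∀ e ∈ (G s).edges, 1 ≤ p.2.1 s e.1 + p.2.1 s e.2)) ∧
       (∀ s : σ, ∀ v ∈ G0.verts ∩ (G s).verts,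
         p.1 v - p.2.1 s v ≤ p.2.2.1 s v ∧ p.2.1 s v - p.1 v ≤ p.2.2.2 s v ∧
         0 ≤ p.2.2.1 s v ∧ 0 ≤ p.2.2.2 s v)}

/-- The feasible region `P` of (2SAG-LP): `D` together with the matching-number equalities. -/
noncomputable def regionP [DecidableEq α] (G0 : FinGraph α) (G : σ → FinGraph α) :
    Set (TwoStagePt α σ) :=
  {p ∈ regionD G0 G |
    (∑ v ∈ G0.verts, p.1 v = (G0.nu : ℝ)) ∧
    ∀ s : σ, ∑ v ∈ (G s).verts, p.2.1 s v = ((G s).nu : ℝ)}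

/-- The dual-flow polyhedron `Q`: points of `D` extended by potentials `γ`, `γ^S`. -/
def regionQ [DecidableEq α] (G0 : FinGraph α) (G : σ → FinGraph α) (V1 V2 : Finset α) :
    Set (TwoStagePt α σ × ((α → ℝ) × (σ → α → ℝ))) :=
  {q | (∀ v ∈ G0.verts ∩ V1, 1 ≤ q.2.1 v + q.1.1 v) ∧
       (∀ s : σ, ∀ v ∈ (G s).verts ∩ V1, 1 ≤ q.2.2 s v + q.1.2.1 s v) ∧
       (∀ s : σ, ∀ v ∈ (G0.verts ∩ (G s).verts) ∩ V1,
          0 ≤ q.2.1 v - q.2.2 s v + q.1.2.2.1 s v ∧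
          0 ≤ q.2.2 s v - q.2.1 v + q.1.2.2.2 s v) ∧
       (∀ e ∈ G0.edges, e.1 ∈ V1 → e.2 ∈ V2 → 0 ≤ q.2.1 e.2 - q.2.1 e.1) ∧
       (∀ s : σ, ∀ e ∈ (G s).edges, e.1 ∈ V1 → e.2 ∈ V2 →
          0 ≤ q.2.2 s e.2 - q.2.2 s e.1) ∧
       (∀ v ∈ G0.verts ∩ V2, 0 ≤ q.1.1 v - q.2.1 v) ∧
       (∀ s : σ, ∀ v ∈ (G s).verts ∩ V2, 0 ≤ q.1.2.1 s v - q.2.2 s v) ∧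
       (∀ s : σ, ∀ v ∈ (G0.verts ∩ (G s).verts) ∩ V2,
          0 ≤ q.2.2 s v - q.2.1 v + q.1.2.2.1 s v ∧
          0 ≤ q.2.1 v - q.2.2 s v + q.1.2.2.2 s v) ∧
       (∀ v ∈ G0.verts, 0 ≤ q.1.1 v) ∧
       (∀ s : σ, ∀ v ∈ (G s).verts, 0 ≤ q.1.2.1 s v) ∧
       (∀ s : σ, ∀ v ∈ G0.verts ∩ (G s).verts,
          0 ≤ q.1.2.2.1 s v ∧ 0 ≤ q.1.2.2.2 s v)}

/-- A linear objective on the `(y, y^S, δ^S, d^S)` variables, with coefficient functions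
`cy`, `cyS`, `cδ`, `cd`. -/
def objC [DecidableEq α] [Fintype σ] (G0 : FinGraph α) (G : σ → FinGraph α)
    (cy : α → ℝ) (cyS cδ cd : σ → α → ℝ) (p : TwoStagePt α σ) : ℝ :=
  ∑ v ∈ G0.verts, cy v * p.1 v
    + ∑ s : σ, ∑ v ∈ (G s).verts, cyS s v * p.2.1 s v
    + ∑ s : σ, ∑ v ∈ G0.verts ∩ (G s).verts,
        (cδ s v * p.2.2.1 s v + cd s v * p.2.2.2 s v)

/-- The dual-flow polyhedron `Q`, embedded in the ambient product space by requiring all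
variables to vanish outside their index sets (`y, γ ∈ ℝ^{V₀}`, `y^S, γ^S ∈ ℝ^{V_S}`,
`δ^S, d^S ∈ ℝ^{V₀ ∩ V_S}`). -/
def regionQemb [DecidableEq α] (G0 : FinGraph α) (G : σ → FinGraph α) (V1 V2 : Finset α) :
    Set (TwoStagePt α σ × ((α → ℝ) × (σ → α → ℝ))) :=
  {q ∈ regionQ G0 G V1 V2 |
    (∀ v ∉ G0.verts, q.1.1 v = 0 ∧ q.2.1 v = 0) ∧
    (∀ s : σ, ∀ v ∉ (G s).verts, q.1.2.1 s v = 0 ∧ q.2.2 s v = 0) ∧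
    (∀ s : σ, ∀ v ∉ G0.verts ∩ (G s).verts, q.1.2.2.1 s v = 0 ∧ q.1.2.2.2 s v = 0)}

/-! At a point of `Q` the slack variables `y, y^S, δ^S, d^S` are bounded below only by the positive
part of a difference of potentials (or of a potential and a constant `0` or `1`); disjointness of
`V1` and `V2` makes this a single positive part per coordinate. At an extreme point every slack
equals its bound, since otherwise it could be moved both ways. Replacing every potential `x` by
`x ± dist(x, ℤ) / 2` is strictly monotone, fixes `0` and `1`, and averages to the identity, so
the two perturbed points (with recomputed slacks) are in `Q` and average to the extreme point.
Hence every potential is an integer, and then so is every slack. -/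

theorem eq_of_mem_extremePoints_of_add_eq_add {E : Type*} [AddCommGroup E] [Module ℝ E]
    {A : Set E} {x y z : E} (hx : x ∈ A.extremePoints ℝ) (hy : y ∈ A) (hz : z ∈ A)
    (h : y + z = x + x) : y = x := by
  refine hx.2 hy hz ?_
  have hmid : midpoint ℝ y z = x := by
    rw [midpoint_eq_iff', Equiv.pointReflection_apply, vsub_eq_sub, vadd_eq_add,
      eq_sub_of_add_eq' h]
    abel
  exact hmid ▸ midpoint_mem_openSegment y z

theorem strictMono_add_mul_of_lipschitzWith {g : ℝ → ℝ} (hg : LipschitzWith 1 g) {t : ℝ}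
    (ht : |t| < 1) : StrictMono fun x => x + t * g x := by
  intro a b hab
  have hdist : |g b - g a| ≤ b - a := by
    simpa [Real.dist_eq, abs_of_pos (sub_pos.2 hab)] using hg.dist_le_mul b a
  have : |t * (g b - g a)| < b - a := by
    rw [abs_mul]
    calc |t| * |g b - g a| ≤ |t| * (b - a) := by gcongr
      _ < 1 * (b - a) := by gcongr
      _ = b - a := one_mul _
  linarith [neg_abs_le (t * (g b - g a)), mul_sub t (g b) (g a)]

theorem posPart_sub_add_posPart_sub {φ ψ : ℝ → ℝ} (hφ : StrictMono φ) (hψ : StrictMono ψ)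
    (hφψ : ∀ x, φ x + ψ x = x + x) (a b : ℝ) :
    (φ a - φ b)⁺ + (ψ a - ψ b)⁺ = (a - b)⁺ + (a - b)⁺ := by
  rcases lt_trichotomy a b with hab | rfl | hab
  · simp [(hφ hab).le, (hψ hab).le, hab.le]
  · simp
  · rw [posPart_eq_self.2 (sub_nonneg.2 (hφ hab).le),
      posPart_eq_self.2 (sub_nonneg.2 (hψ hab).le), posPart_eq_self.2 (sub_nonneg.2 hab.le)]
    linarith [hφψ a, hφψ b]

theorem IntegralReal.sub {x y : ℝ} (hx : IntegralReal x) (hy : IntegralReal y) :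
    IntegralReal (x - y) := by
  obtain ⟨m, rfl⟩ := hx
  obtain ⟨n, rfl⟩ := hy
  exact ⟨m - n, by push_cast; ring⟩

theorem IntegralReal.posPart {x : ℝ} (hx : IntegralReal x) : IntegralReal x⁺ := by
  obtain ⟨n, rfl⟩ := hx
  exact ⟨n⁺, by simp [posPart_def]⟩

def FinGraph.IsPotential (H : FinGraph α) (V1 V2 : Finset α) (γ : α → ℝ) : Prop :=
  (∀ e ∈ H.edges, e.1 ∈ V1 → e.2 ∈ V2 → γ e.1 ≤ γ e.2) ∧ ∀ v ∉ H.verts, γ v = 0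

theorem FinGraph.IsPotential.comp {H : FinGraph α} {V1 V2 : Finset α} {γ : α → ℝ}
    (hγ : H.IsPotential V1 V2 γ) {φ : ℝ → ℝ} (hφ : Monotone φ) (hφ0 : φ 0 = 0) :
    H.IsPotential V1 V2 (φ ∘ γ) :=
  ⟨fun e he h1 h2 => hφ (hγ.1 e he h1 h2), fun v hv => by simp [hγ.2 v hv, hφ0]⟩

section DualFlow

variable [DecidableEq α]

def sideBound (I V1 V2 : Finset α) (a b : α → ℝ) (v : α) : ℝ :=
  if v ∈ I ∩ V1 then (a v)⁺ else if v ∈ I ∩ V2 then (b v)⁺ else 0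

theorem sideBound_le_iff {V1 V2 : Finset α} (hdisj : Disjoint V1 V2) {I : Finset α}
    {a b : α → ℝ} {v : α} {z : ℝ} :
    sideBound I V1 V2 a b v ≤ z ↔
      (v ∈ I ∩ V1 → a v ≤ z) ∧ (v ∈ I ∩ V2 → b v ≤ z) ∧ 0 ≤ z := by
  have hV2 : v ∈ I ∩ V1 → v ∉ I ∩ V2 := fun h1 h2 =>
    Finset.disjoint_left.1 hdisj (Finset.mem_inter.1 h1).2 (Finset.mem_inter.1 h2).2
  unfold sideBound
  split_ifs <;> simp_all [posPart_def]

theorem sideBound_eq_zero {V1 V2 I : Finset α} {a b : α → ℝ} {v : α} (hv : v ∉ I) :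
    sideBound I V1 V2 a b v = 0 := by
  simp [sideBound, hv]

variable (G0 : FinGraph α) (G : σ → FinGraph α) (V1 V2 : Finset α)

/-- The least values of `(y, y^S, δ^S, d^S)` compatible in `Q` with potentials `g = (γ, γ^S)`. -/
def minSlack (g : (α → ℝ) × (σ → α → ℝ)) : TwoStagePt α σ :=
  (sideBound G0.verts V1 V2 (1 - g.1) g.1,
   fun s => sideBound (G s).verts V1 V2 (1 - g.2 s) (g.2 s),
   fun s => sideBound (G0.verts ∩ (G s).verts) V1 V2 (g.2 s - g.1) (g.1 - g.2 s),
   fun s => sideBound (G0.verts ∩ (G s).verts) V1 V2 (g.1 - g.2 s) (g.2 s - g.1))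

def SlackSupported (p : TwoStagePt α σ) : Prop :=
  (∀ v ∉ G0.verts, p.1 v = 0) ∧ (∀ s, ∀ v ∉ (G s).verts, p.2.1 s v = 0) ∧
    ∀ s, ∀ v ∉ G0.verts ∩ (G s).verts, p.2.2.1 s v = 0 ∧ p.2.2.2 s v = 0

variable {G0 G V1 V2}

theorem sideBound_add_sideBound {I : Finset α} {a b a' b' c e : α → ℝ} {v : α}
    (ha : (a v)⁺ + (a' v)⁺ = (c v)⁺ + (c v)⁺) (hb : (b v)⁺ + (b' v)⁺ = (e v)⁺ + (e v)⁺) :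
    sideBound I V1 V2 a b v + sideBound I V1 V2 a' b' v =
      sideBound I V1 V2 c e v + sideBound I V1 V2 c e v := by
  unfold sideBound
  split_ifs <;> simp [ha, hb]

theorem integralReal_sideBound {I : Finset α} {a b : α → ℝ} (ha : ∀ v, IntegralReal (a v))
    (hb : ∀ v, IntegralReal (b v)) (v : α) : IntegralReal (sideBound I V1 V2 a b v) := by
  unfold sideBound
  split_ifs
  exacts [(ha v).posPart, (hb v).posPart, ⟨0, by simp⟩]

theorem slackSupported_minSlack (g : (α → ℝ) × (σ → α → ℝ)) :
    SlackSupported G0 G (minSlack G0 G V1 V2 g) :=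
  ⟨fun _ hv => sideBound_eq_zero hv, fun _ _ hv => sideBound_eq_zero hv,
    fun _ _ hv => ⟨sideBound_eq_zero hv, sideBound_eq_zero hv⟩⟩

theorem mem_regionQemb_iff (hdisj : Disjoint V1 V2)
    {q : TwoStagePt α σ × ((α → ℝ) × (σ → α → ℝ))} :
    q ∈ regionQemb G0 G V1 V2 ↔
      (G0.IsPotential V1 V2 q.2.1 ∧ ∀ s, (G s).IsPotential V1 V2 (q.2.2 s)) ∧
        minSlack G0 G V1 V2 q.2 ≤ q.1 ∧ SlackSupported G0 G q.1 := by
  obtain ⟨⟨y, Y, δ, d⟩, γ, γS⟩ := q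
  have hshift (a b c : ℝ) : 0 ≤ a - b + c ↔ b - a ≤ c := by constructor <;> intro <;> linarith
  have hnonneg {I : Finset α} {z : α → ℝ} (hz : ∀ v ∉ I, z v = 0) (h : ∀ v ∈ I, 0 ≤ z v)
      (v : α) : 0 ≤ z v := by
    by_cases hv : v ∈ I <;> simp [h, hz, hv]
  simp only [regionQemb, regionQ, minSlack, SlackSupported, FinGraph.IsPotential,
    Set.mem_ofPred_eq, Prod.mk_le_mk, Pi.le_def, sideBound_le_iff hdisj, Pi.sub_apply,
    Pi.one_apply, sub_nonneg, forall_and, hshift, sub_le_iff_le_add']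
  constructor
  · rintro ⟨⟨h1, h2, ⟨h3, h3'⟩, h4, h5, h6, h7, ⟨h8, h8'⟩, h9, h10, h11, h11'⟩, ⟨z1, z1'⟩,
      ⟨z2, z2'⟩, z3, z3'⟩
    refine ⟨⟨⟨h4, z1'⟩, h5, z2'⟩, ⟨⟨h1, h6, ?_⟩, ⟨h2, h7, ?_⟩, ⟨h3, h8, ?_⟩, h3', h8', ?_⟩,
      z1, z2, z3, z3'⟩
    exacts [hnonneg z1 h9, fun s => hnonneg (z2 s) (h10 s), fun s => hnonneg (z3 s) (h11 s),
      fun s => hnonneg (z3' s) (h11' s)]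
  · rintro ⟨⟨⟨h4, z1'⟩, h5, z2'⟩, ⟨⟨h1, h6, h9⟩, ⟨h2, h7, h10⟩, ⟨h3, h8, h11⟩, h3', h8', h11'⟩,
      z1, z2, z3, z3'⟩
    exact ⟨⟨h1, h2, ⟨h3, h3'⟩, h4, h5, h6, h7, ⟨h8, h8'⟩, fun v _ => h9 v, fun s v _ => h10 s v,
      fun s v _ => h11 s v, fun s v _ => h11' s v⟩, ⟨z1, z1'⟩, ⟨z2, z2'⟩, z3, z3'⟩

def mapPotentials (φ : ℝ → ℝ) (g : (α → ℝ) × (σ → α → ℝ)) : (α → ℝ) × (σ → α → ℝ) :=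
  (φ ∘ g.1, fun s => φ ∘ g.2 s)

theorem minSlack_mapPotentials_add {φ ψ : ℝ → ℝ} (hφ : StrictMono φ) (hψ : StrictMono ψ)
    (hφψ : ∀ x, φ x + ψ x = x + x) (hφ0 : φ 0 = 0) (hφ1 : φ 1 = 1)
    (g : (α → ℝ) × (σ → α → ℝ)) :
    minSlack G0 G V1 V2 (mapPotentials φ g) + minSlack G0 G V1 V2 (mapPotentials ψ g) =
      minSlack G0 G V1 V2 g + minSlack G0 G V1 V2 g := by
  have hψ0 : ψ 0 = 0 := by linarith [hφψ 0]
  have hψ1 : ψ 1 = 1 := by linarith [hφψ 1]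
  have key := posPart_sub_add_posPart_sub hφ hψ hφψ
  have key1 (x : ℝ) : (1 - φ x)⁺ + (1 - ψ x)⁺ = (1 - x)⁺ + (1 - x)⁺ := by
    simpa [hφ1, hψ1] using key 1 x
  have key0 (x : ℝ) : (φ x)⁺ + (ψ x)⁺ = x⁺ + x⁺ := by simpa [hφ0, hψ0] using key x 0
  refine Prod.ext (funext fun v => ?_) (Prod.ext (funext fun s => funext fun v => ?_)
    (Prod.ext (funext fun s => funext fun v => ?_) (funext fun s => funext fun v => ?_)))
  exacts [sideBound_add_sideBound (key1 _) (key0 _), sideBound_add_sideBound (key1 _) (key0 _),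
    sideBound_add_sideBound (key _ _) (key _ _), sideBound_add_sideBound (key _ _) (key _ _)]

variable {q : TwoStagePt α σ × ((α → ℝ) × (σ → α → ℝ))}

theorem fst_eq_minSlack_of_mem_extremePoints (hdisj : Disjoint V1 V2)
    (hq : q ∈ (regionQemb G0 G V1 V2).extremePoints ℝ) : q.1 = minSlack G0 G V1 V2 q.2 := by
  obtain ⟨hpot, hle, hsupp⟩ := (mem_regionQemb_iff hdisj).1 hq.1
  set m := minSlack G0 G V1 V2 q.2
  have hm : SlackSupported G0 G m := slackSupported_minSlack q.2
  have hlow : (m, q.2) ∈ regionQemb G0 G V1 V2 := (mem_regionQemb_iff hdisj).2 ⟨hpot, le_rfl, hm⟩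
  have hhigh : (q.1 + q.1 - m, q.2) ∈ regionQemb G0 G V1 V2 := by
    refine (mem_regionQemb_iff hdisj).2
      ⟨hpot, le_sub_iff_add_le.2 (add_le_add hle hle), ?_, ?_, ?_⟩
    · intro v hv; simp [hsupp.1 v hv, hm.1 v hv]
    · intro s v hv; simp [hsupp.2.1 s v hv, hm.2.1 s v hv]
    · intro s v hv; simp [hsupp.2.2 s v hv, hm.2.2 s v hv]
  have := eq_of_mem_extremePoints_of_add_eq_add hq hlow hhigh (by ext <;> simp)
  exact (congrArg Prod.fst this).symm

theorem mapPotentials_eq_of_mem_extremePoints (hdisj : Disjoint V1 V2)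
    (hq : q ∈ (regionQemb G0 G V1 V2).extremePoints ℝ) {φ ψ : ℝ → ℝ} (hφ : StrictMono φ)
    (hψ : StrictMono ψ) (hφψ : ∀ x, φ x + ψ x = x + x) (hφ0 : φ 0 = 0) (hφ1 : φ 1 = 1) :
    mapPotentials φ q.2 = q.2 := by
  obtain ⟨hpot, -⟩ := (mem_regionQemb_iff hdisj).1 hq.1
  have hmem {χ : ℝ → ℝ} (hχ : Monotone χ) (hχ0 : χ 0 = 0) :
      (minSlack G0 G V1 V2 (mapPotentials χ q.2), mapPotentials χ q.2) ∈ regionQemb G0 G V1 V2 :=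
    (mem_regionQemb_iff hdisj).2 ⟨⟨hpot.1.comp hχ hχ0, fun s => (hpot.2 s).comp hχ hχ0⟩, le_rfl,
      slackSupported_minSlack _⟩
  have hsum : (minSlack G0 G V1 V2 (mapPotentials φ q.2), mapPotentials φ q.2) +
      (minSlack G0 G V1 V2 (mapPotentials ψ q.2), mapPotentials ψ q.2) = q + q := by
    rw [Prod.mk_add_mk, minSlack_mapPotentials_add hφ hψ hφψ hφ0 hφ1,
      ← fst_eq_minSlack_of_mem_extremePoints hdisj hq]
    exact Prod.ext rfl (Prod.ext (funext fun v => hφψ _) (funext fun s => funext fun v => hφψ _))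
  exact congrArg Prod.snd (eq_of_mem_extremePoints_of_add_eq_add hq
    (hmem hφ.monotone hφ0) (hmem hψ.monotone (by linarith [hφψ 0])) hsum)

theorem potentials_mem_of_mem_extremePoints (hdisj : Disjoint V1 V2)
    (hq : q ∈ (regionQemb G0 G V1 V2).extremePoints ℝ) {S : Set ℝ} (hS : IsClosed S)
    (h0 : (0 : ℝ) ∈ S) (h1 : (1 : ℝ) ∈ S) : (∀ v, q.2.1 v ∈ S) ∧ ∀ s v, q.2.2 s v ∈ S := by
  let φ (t x : ℝ) : ℝ := x + t * Metric.infDist x S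
  have hmono {t : ℝ} (ht : |t| < 1) : StrictMono (φ t) :=
    strictMono_add_mul_of_lipschitzWith (Metric.lipschitz_infDist_pt S) ht
  have hfix (t : ℝ) {x : ℝ} (hx : x ∈ S) : φ t x = x := by
    simp [φ, Metric.infDist_zero_of_mem hx]
  have hmem {x : ℝ} (hx : φ (1 / 2) x = x) : x ∈ S :=
    (hS.mem_iff_infDist_zero ⟨0, h0⟩).2 (by simpa [φ] using hx)
  have h := mapPotentials_eq_of_mem_extremePoints hdisj hq (hmono (t := 1 / 2) (by norm_num))
    (hmono (t := -(1 / 2)) (by norm_num)) (fun x => by ring) (hfix _ h0) (hfix _ h1)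
  exact ⟨fun v => hmem (congrFun (congrArg Prod.fst h) v),
    fun s v => hmem (congrFun (congrFun (congrArg Prod.snd h) s) v)⟩

end DualFlow

theorem extremePoints_regionQ_integral_general [DecidableEq α]
    (G0 : FinGraph α) (G : σ → FinGraph α) (V1 V2 : Finset α)
    (hdisj : Disjoint V1 V2)
    (q : TwoStagePt α σ × ((α → ℝ) × (σ → α → ℝ)))
    (hq : q ∈ Set.extremePoints ℝ (regionQemb G0 G V1 V2)) :
    (∀ v, IntegralReal (q.1.1 v)) ∧ (∀ s v, IntegralReal (q.1.2.1 s v)) ∧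
    (∀ s v, IntegralReal (q.1.2.2.1 s v)) ∧ (∀ s v, IntegralReal (q.1.2.2.2 s v)) ∧
    (∀ v, IntegralReal (q.2.1 v)) ∧ (∀ s v, IntegralReal (q.2.2 s v)) := by
  have hclosed : IsClosed {x : ℝ | IntegralReal x} := by
    convert Real.isClosed_range_intCast using 1
    ext x
    simp [IntegralReal, eq_comm]
  have h0 : IntegralReal 0 := ⟨0, by simp⟩
  have h1 : IntegralReal 1 := ⟨1, by simp⟩
  obtain ⟨hγ, hγS⟩ := potentials_mem_of_mem_extremePoints hdisj hq hclosed h0 h1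
  rw [fst_eq_minSlack_of_mem_extremePoints hdisj hq]
  exact ⟨integralReal_sideBound (fun v => h1.sub (hγ v)) hγ,
    fun s => integralReal_sideBound (fun v => h1.sub (hγS s v)) (hγS s),
    fun s => integralReal_sideBound (fun v => (hγS s v).sub (hγ v))
      (fun v => (hγ v).sub (hγS s v)),
    fun s => integralReal_sideBound (fun v => (hγ v).sub (hγS s v))
      (fun v => (hγS s v).sub (hγ v)),
    hγ, hγS⟩

/-- Every extreme point of the polyhedron `Q` (the feasible region of the dual of
the auxiliary maximum flow LP) has all coordinates integral. -/
theorem extremePoints_regionQ_integral [DecidableEq α]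
    (G0 : FinGraph α) (G : σ → FinGraph α) (V1 V2 : Finset α)
    (hdisj : Disjoint V1 V2)
    (hWF0 : G0.WF) (hWFs : ∀ s : σ, (G s).WF)
    (hbip0 : G0.Bipartition V1 V2) (hbips : ∀ s : σ, (G s).Bipartition V1 V2)
    (q : TwoStagePt α σ × ((α → ℝ) × (σ → α → ℝ)))
    (hq : q ∈ Set.extremePoints ℝ (regionQemb G0 G V1 V2)) :
    (∀ v, IntegralReal (q.1.1 v)) ∧ (∀ s v, IntegralReal (q.1.2.1 s v)) ∧
    (∀ s v, IntegralReal (q.1.2.2.1 s v)) ∧ (∀ s v, IntegralReal (q.1.2.2.2 s v)) ∧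
    (∀ v, IntegralReal (q.2.1 v)) ∧ (∀ s v, IntegralReal (q.2.2 s v)) :=
  extremePoints_regionQ_integral_general G0 G V1 V2 hdisj q hq
end

section
/- Every feasible solution of the relaxed LP region D extends to a feasible solution of the dual-flow polyhedron Q: if (y, (y^S), (δ^S), (d^S)) ∈ D and one defines γ_v = 1 − y_v for v ∈ V_0∩V_1, γ_v = y_v for v ∈ V_0∩V_2, γ^S_v = 1 − y^S_v for v ∈ V_S∩V_1, and γ^S_v = y^S_v for v ∈ V_S∩V_2, then the extended tuple (y, (y^S), (δ^S), (d^S), γ, (γ^S)) lies in Q. -/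
open FinGraph

variable {α σ : Type*}

/-! The potential `γ` reflects `y` on `V₁` and copies it on `V₂`. A covering inequality
`1 ≤ y u + y v` on an edge `u v` from `V₁` to `V₂` then says exactly `γ u ≤ γ v`, and since
reflection preserves differences up to sign, the deviation constraints on `γ` are those on `y`,
with the roles of `δ` and `d` exchanged on `V₁`. -/

section DualPotential

variable [DecidableEq α] {V1 : Finset α} {y y' : α → ℝ} {v : α}

def dualPotential (V1 : Finset α) (y : α → ℝ) : α → ℝ :=
  fun v => if v ∈ V1 then 1 - y v else y v

theorem dualPotential_of_mem (hv : v ∈ V1) : dualPotential V1 y v = 1 - y v :=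
  if_pos hv

theorem dualPotential_of_notMem (hv : v ∉ V1) : dualPotential V1 y v = y v :=
  if_neg hv

theorem one_le_dualPotential_add (hv : v ∈ V1) : 1 ≤ dualPotential V1 y v + y v := by
  rw [dualPotential_of_mem hv]
  linarith

theorem dualPotential_le_self (hv : v ∉ V1) : 0 ≤ y v - dualPotential V1 y v := by
  rw [dualPotential_of_notMem hv, sub_self]

theorem dualPotential_le_of_cover {u : α} (hu : u ∈ V1) (hv : v ∉ V1)
    (hcover : 1 ≤ y u + y v) : 0 ≤ dualPotential V1 y v - dualPotential V1 y u := by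
  rw [dualPotential_of_mem hu, dualPotential_of_notMem hv]
  linarith

theorem dualPotential_deviation_of_mem {δ d : ℝ} (hv : v ∈ V1) (hδ : y v - y' v ≤ δ)
    (hd : y' v - y v ≤ d) :
    0 ≤ dualPotential V1 y v - dualPotential V1 y' v + δ ∧
      0 ≤ dualPotential V1 y' v - dualPotential V1 y v + d := by
  rw [dualPotential_of_mem hv, dualPotential_of_mem hv]
  constructor <;> linarith

theorem dualPotential_deviation_of_notMem {δ d : ℝ} (hv : v ∉ V1) (hδ : y v - y' v ≤ δ)
    (hd : y' v - y v ≤ d) :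
    0 ≤ dualPotential V1 y' v - dualPotential V1 y v + δ ∧
      0 ≤ dualPotential V1 y v - dualPotential V1 y' v + d := by
  rw [dualPotential_of_notMem hv, dualPotential_of_notMem hv]
  constructor <;> linarith

end DualPotential

theorem regionD_extends_to_regionQ_general [DecidableEq α]
    (G0 : FinGraph α) (G : σ → FinGraph α) (V1 V2 : Finset α)
    (hdisj : Disjoint V1 V2)
    (p : TwoStagePt α σ) (hp : p ∈ regionD G0 G) :
    (p, (fun v => if v ∈ V1 then 1 - p.1 v else p.1 v,
         fun s v => if v ∈ V1 then 1 - p.2.1 s v else p.2.1 s v))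
      ∈ regionQ G0 G V1 V2 := by
  have notMem_of_mem_V2 : ∀ {v}, v ∈ V2 → v ∉ V1 := fun hv h1 =>
    Finset.disjoint_left.1 hdisj h1 hv
  obtain ⟨hy, hcover, hyS, hdev⟩ := hp
  change (p, (dualPotential V1 p.1, fun s => dualPotential V1 (p.2.1 s))) ∈ regionQ G0 G V1 V2
  refine ⟨fun v hv => one_le_dualPotential_add (Finset.mem_inter.1 hv).2,
    fun s v hv => one_le_dualPotential_add (Finset.mem_inter.1 hv).2,
    fun s v hv => ?_,
    fun e he h1 h2 => dualPotential_le_of_cover h1 (notMem_of_mem_V2 h2) (hcover e he),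
    fun s e he h1 h2 => dualPotential_le_of_cover h1 (notMem_of_mem_V2 h2) ((hyS s).2 e he),
    fun v hv => dualPotential_le_self (notMem_of_mem_V2 (Finset.mem_inter.1 hv).2),
    fun s v hv => dualPotential_le_self (notMem_of_mem_V2 (Finset.mem_inter.1 hv).2),
    fun s v hv => ?_, hy, fun s => (hyS s).1,
    fun s v hv => ⟨(hdev s v hv).2.2.1, (hdev s v hv).2.2.2⟩⟩
  · obtain ⟨hv, hv1⟩ := Finset.mem_inter.1 hv
    exact dualPotential_deviation_of_mem hv1 (hdev s v hv).1 (hdev s v hv).2.1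
  · obtain ⟨hv, hv2⟩ := Finset.mem_inter.1 hv
    exact dualPotential_deviation_of_notMem (notMem_of_mem_V2 hv2) (hdev s v hv).1
      (hdev s v hv).2.1

/-- Every feasible solution of the relaxed region `D` extends to a feasible
solution of the dual-flow polyhedron `Q`, setting `γ_v = 1 - y_v` on `V₁` (hence on `V₀ ∩ V₁`,
resp. `V_S ∩ V₁`) and `γ_v = y_v` on `V₂` (note `V₁` and `V₂` are disjoint). -/
theorem regionD_extends_to_regionQ [DecidableEq α]
    (G0 : FinGraph α) (G : σ → FinGraph α) (V1 V2 : Finset α)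
    (hdisj : Disjoint V1 V2)
    (hWF0 : G0.WF) (hWFs : ∀ s : σ, (G s).WF)
    (hbip0 : G0.Bipartition V1 V2) (hbips : ∀ s : σ, (G s).Bipartition V1 V2)
    (p : TwoStagePt α σ) (hp : p ∈ regionD G0 G) :
    (p, (fun v => if v ∈ V1 then 1 - p.1 v else p.1 v,
         fun s v => if v ∈ V1 then 1 - p.2.1 s v else p.2.1 s v))
      ∈ regionQ G0 G V1 V2 :=
  regionD_extends_to_regionQ_general G0 G V1 V2 hdisj p hp
end

section
/- For every linear objective c with nonnegative coefficients on all of the variables y, (y^S), (δ^S), (d^S) (and not involving the γ variables), and every point (y, (y^S), (δ^S), (d^S), γ, (γ^S)) in the dual-flow polyhedron Q, there exists a point μ' in the region D with c(μ') ≤ c(y, (y^S), (δ^S), (d^S)). -/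
open FinGraph

variable {α σ : Type*}

def coverOfPotential [DecidableEq α] (V1 : Finset α) (γ : α → ℝ) (v : α) : ℝ :=
  if v ∈ V1 then max (1 - γ v) 0 else max (γ v) 0

section coverOfPotential

variable [DecidableEq α] {V1 V2 U : Finset α} {γ : α → ℝ}

lemma coverOfPotential_nonneg (V1 : Finset α) (γ : α → ℝ) (v : α) :
    0 ≤ coverOfPotential V1 γ v := by
  unfold coverOfPotential
  split <;> exact le_max_right _ _

lemma FinGraph.Bipartition.one_le_coverOfPotential_add {G : FinGraph α}
    (hbip : G.Bipartition V1 V2) (hdisj : Disjoint V1 V2)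
    (hγ : ∀ e ∈ G.edges, e.1 ∈ V1 → e.2 ∈ V2 → 0 ≤ γ e.2 - γ e.1) :
    ∀ e ∈ G.edges, 1 ≤ coverOfPotential V1 γ e.1 + coverOfPotential V1 γ e.2 := by
  intro e he
  obtain ⟨he1, he2⟩ := hbip.2 e he
  have he2' : e.2 ∉ V1 := Finset.disjoint_right.1 hdisj he2
  simp only [coverOfPotential, if_pos he1, if_neg he2']
  linarith [le_max_left (1 - γ e.1) 0, le_max_left (γ e.2) 0, hγ e he he1 he2]

lemma coverOfPotential_le_of_forall {y : α → ℝ} (hU : U ⊆ V1 ∪ V2)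
    (h1 : ∀ v ∈ U ∩ V1, 1 ≤ γ v + y v) (h2 : ∀ v ∈ U ∩ V2, 0 ≤ y v - γ v)
    (h0 : ∀ v ∈ U, 0 ≤ y v) :
    ∀ v ∈ U, coverOfPotential V1 γ v ≤ y v := by
  intro v hv
  unfold coverOfPotential
  split_ifs with hv1
  · exact max_le (by linarith [h1 v (Finset.mem_inter.2 ⟨hv, hv1⟩)]) (h0 v hv)
  · have hv2 : v ∈ V2 := (Finset.mem_union.1 (hU hv)).resolve_left hv1
    exact max_le (by linarith [h2 v (Finset.mem_inter.2 ⟨hv, hv2⟩)]) (h0 v hv)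

lemma coverOfPotential_sub_le_of_forall {γ' c : α → ℝ} (hU : U ⊆ V1 ∪ V2)
    (h1 : ∀ v ∈ U ∩ V1, 0 ≤ γ v - γ' v + c v) (h2 : ∀ v ∈ U ∩ V2, 0 ≤ γ' v - γ v + c v)
    (hc : ∀ v ∈ U, 0 ≤ c v) :
    ∀ v ∈ U, coverOfPotential V1 γ v - coverOfPotential V1 γ' v ≤ c v := by
  intro v hv
  unfold coverOfPotential
  split_ifs with hv1
  · refine (max_sub_max_le_max _ _ _ _).trans (max_le ?_ (by simpa using hc v hv))
    linarith [h1 v (Finset.mem_inter.2 ⟨hv, hv1⟩)]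
  · have hv2 : v ∈ V2 := (Finset.mem_union.1 (hU hv)).resolve_left hv1
    refine (max_sub_max_le_max _ _ _ _).trans (max_le ?_ (by simpa using hc v hv))
    linarith [h2 v (Finset.mem_inter.2 ⟨hv, hv2⟩)]

end coverOfPotential

lemma objC_le_objC_of_le [DecidableEq α] [Fintype σ] {G0 : FinGraph α} {G : σ → FinGraph α}
    {cy : α → ℝ} {cyS : σ → α → ℝ} (cδ cd : σ → α → ℝ)
    (hcy : ∀ v ∈ G0.verts, 0 ≤ cy v) (hcyS : ∀ s : σ, ∀ v ∈ (G s).verts, 0 ≤ cyS s v)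
    {p p' : TwoStagePt α σ} (hy : ∀ v ∈ G0.verts, p.1 v ≤ p'.1 v)
    (hyS : ∀ s : σ, ∀ v ∈ (G s).verts, p.2.1 s v ≤ p'.2.1 s v) (hdev : p.2.2 = p'.2.2) :
    objC G0 G cy cyS cδ cd p ≤ objC G0 G cy cyS cδ cd p' := by
  obtain ⟨y, yS, dev⟩ := p
  obtain ⟨y', yS', dev'⟩ := p'
  obtain rfl : dev = dev' := hdev
  unfold objC
  gcongr with v hv s _ v hv
  exacts [hcy v hv, hy v hv, hcyS s v hv, hyS s v hv]

theorem regionQ_dominated_by_regionD_general [DecidableEq α] [Fintype σ]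
    (G0 : FinGraph α) (G : σ → FinGraph α) (V1 V2 : Finset α)
    (hdisj : Disjoint V1 V2)
    (hbip0 : G0.Bipartition V1 V2) (hbips : ∀ s : σ, (G s).Bipartition V1 V2)
    (cy : α → ℝ) (cyS cδ cd : σ → α → ℝ)
    (hcy : ∀ v ∈ G0.verts, 0 ≤ cy v)
    (hcyS : ∀ s : σ, ∀ v ∈ (G s).verts, 0 ≤ cyS s v)
    (q : TwoStagePt α σ × ((α → ℝ) × (σ → α → ℝ)))
    (hq : q ∈ regionQ G0 G V1 V2) :
    ∃ p ∈ regionD G0 G,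
      objC G0 G cy cyS cδ cd p ≤ objC G0 G cy cyS cδ cd q.1 := by
  obtain ⟨⟨y, yS, δ, d⟩, γ, γS⟩ := q
  simp only [regionQ, Set.mem_ofPred_eq] at hq
  obtain ⟨hy1, hyS1, hdev1, hflow, hflowS, hy2, hyS2, hdev2, hy0, hyS0, hdev0⟩ := hq
  have hcommon (s : σ) : G0.verts ∩ (G s).verts ⊆ V1 ∪ V2 :=
    Finset.inter_subset_left.trans hbip0.1
  refine ⟨(coverOfPotential V1 γ, fun s => coverOfPotential V1 (γS s), δ, d),
    ⟨fun v _ => coverOfPotential_nonneg V1 γ v, hbip0.one_le_coverOfPotential_add hdisj hflow,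
      fun s => ⟨fun v _ => coverOfPotential_nonneg V1 (γS s) v,
        (hbips s).one_le_coverOfPotential_add hdisj (hflowS s)⟩,
      fun s v hv => ⟨?_, ?_, hdev0 s v hv⟩⟩,
    objC_le_objC_of_le cδ cd hcy hcyS
      (coverOfPotential_le_of_forall hbip0.1 hy1 hy2 hy0)
      (fun s => coverOfPotential_le_of_forall (hbips s).1 (hyS1 s) (hyS2 s) (hyS0 s)) rfl⟩
  · exact coverOfPotential_sub_le_of_forall (hcommon s) (fun v hv => (hdev1 s v hv).1)
      (fun v hv => (hdev2 s v hv).1) (fun v hv => (hdev0 s v hv).1) v hv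
  · exact coverOfPotential_sub_le_of_forall (hcommon s) (fun v hv => (hdev1 s v hv).2)
      (fun v hv => (hdev2 s v hv).2) (fun v hv => (hdev0 s v hv).2) v hv

/-- For every linear objective `c` with nonnegative coefficients on the
variables `y, y^S, δ^S, d^S` (and not involving the `γ` variables), every point of the
dual-flow polyhedron `Q` is dominated by a point of `D`: there is `μ' ∈ D` whose objective
value is at most that of the `(y, y^S, δ^S, d^S)`-part of the given point of `Q`. -/
theorem regionQ_dominated_by_regionD [DecidableEq α] [Fintype σ]
    (G0 : FinGraph α) (G : σ → FinGraph α) (V1 V2 : Finset α)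
    (hdisj : Disjoint V1 V2)
    (hWF0 : G0.WF) (hWFs : ∀ s : σ, (G s).WF)
    (hbip0 : G0.Bipartition V1 V2) (hbips : ∀ s : σ, (G s).Bipartition V1 V2)
    (cy : α → ℝ) (cyS cδ cd : σ → α → ℝ)
    (hcy : ∀ v ∈ G0.verts, 0 ≤ cy v)
    (hcyS : ∀ s : σ, ∀ v ∈ (G s).verts, 0 ≤ cyS s v)
    (hcδ : ∀ s : σ, ∀ v ∈ G0.verts ∩ (G s).verts, 0 ≤ cδ s v)
    (hcd : ∀ s : σ, ∀ v ∈ G0.verts ∩ (G s).verts, 0 ≤ cd s v)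
    (q : TwoStagePt α σ × ((α → ℝ) × (σ → α → ℝ)))
    (hq : q ∈ regionQ G0 G V1 V2) :
    ∃ p ∈ regionD G0 G,
      objC G0 G cy cyS cδ cd p ≤ objC G0 G cy cyS cδ cd q.1 :=
  regionQ_dominated_by_regionD_general G0 G V1 V2 hdisj hbip0 hbips cy cyS cδ cd hcy hcyS q hq
end

section
/- Let α ∈ ℝ^{V_0}, α^S ∈ ℝ^{V_S} be arbitrary, β^S, b^S ∈ ℝ^{V_0∩V_S} nonnegative, and set ε = 1/(1 + Σ_{v∈V_0}|α_v| + Σ_{S∈𝒮}Σ_{v∈V_S}|α^S_v| + Σ_{S∈𝒮}Σ_{v∈V_0∩V_S}(β^S_v + b^S_v)). If μ̂ = (ŷ, (ŷ^S), (δ̂^S), (d̂^S)) is an integral (all coordinates integer) minimizer over the region D of the objective F_ε(μ) = Σ_{v∈V_0} y_v + Σ_{S∈𝒮}Σ_{v∈V_S} y^S_v + ε·(Σ_{v∈V_0} α_v y_v + Σ_{S∈𝒮}Σ_{v∈V_S} α^S_v y^S_v + Σ_{S∈𝒮}Σ_{v∈V_0∩V_S} (β^S_v δ^S_v + b^S_v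 d^S_v)), then μ̂ satisfies Σ_{v∈V_0} ŷ_v = ν(G_0) and Σ_{v∈V_S} ŷ^S_v = ν(G_S) for all S∈𝒮 (hence μ̂ ∈ P), and μ̂ minimizes the objective G(μ) = Σ_{v∈V_0} α_v y_v + Σ_{S∈𝒮}Σ_{v∈V_S} α^S_v y^S_v + Σ_{S∈𝒮}Σ_{v∈V_0∩V_S} (β^S_v δ^S_v + b^S_v d^S_v) over P. -/
open FinGraph

variable {α σ : Type*}

open Finset

theorem Finset.exists_matching_of_card_le_card_biUnion_add {ι β : Type*} [DecidableEq ι]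
    [DecidableEq β] (s : Finset ι) (t : ι → Finset β) (d : ℕ)
    (h : ∀ A ⊆ s, #A ≤ #(A.biUnion t) + d) :
    ∃ M : Finset (ι × β), (∀ p ∈ M, p.1 ∈ s ∧ p.2 ∈ t p.1) ∧
      Set.InjOn Prod.fst (M : Set (ι × β)) ∧ Set.InjOn Prod.snd (M : Set (ι × β)) ∧
      #s ≤ #M + d := by
  -- Hall's theorem after adding `d` new elements to every `t i`.
  set t' : s → Finset (β ⊕ Fin d) := fun i => (t i).map .inl ∪ univ.map .inr
  have hall : ∀ A : Finset s, #A ≤ #(A.biUnion t') := by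
    intro A
    obtain rfl | ⟨i, hi⟩ := A.eq_empty_or_nonempty
    · simp
    have hsub : (A.biUnion (t ∘ (↑))).map .inl ∪ univ.map .inr ⊆ A.biUnion t' := by
      intro x hx
      simp only [mem_union, mem_map, mem_biUnion, Function.comp_apply, t'] at hx ⊢
      rcases hx with ⟨b, ⟨j, hj, hb⟩, rfl⟩ | ⟨k, -, rfl⟩
      · exact ⟨j, hj, .inl ⟨b, hb, rfl⟩⟩
      · exact ⟨i, hi, .inr ⟨k, mem_univ _, rfl⟩⟩
    calc #A = #(A.map (.subtype _)) := (card_map _).symm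
      _ ≤ #((A.map (.subtype _)).biUnion t) + d :=
        h _ fun x hx => by obtain ⟨y, -, rfl⟩ := mem_map.mp hx; exact y.2
      _ = #((A.biUnion (t ∘ (↑))).map .inl ∪ univ.map .inr) := by
        rw [card_union_of_disjoint (by simp [disjoint_left]), card_map, card_map, card_univ,
          Fintype.card_fin]
        congr 2
        ext
        simp
      _ ≤ #(A.biUnion t') := card_le_card hsub
  obtain ⟨f, hf, hft⟩ := (all_card_le_biUnion_card_iff_exists_injective t').mp hall
  set M := (s ×ˢ s.biUnion t).filter fun p => ∃ h : p.1 ∈ s, f ⟨p.1, h⟩ = .inl p.2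
  have hM : ∀ p ∈ M, ∃ h : p.1 ∈ s, f ⟨p.1, h⟩ = .inl p.2 := fun p hp => (mem_filter.mp hp).2
  refine ⟨M, fun p hp => ?_, ?_, ?_, ?_⟩
  · obtain ⟨h1, h2⟩ := hM p hp
    have := hft ⟨p.1, h1⟩
    exact ⟨h1, by simpa [h2, t'] using this⟩
  · rintro ⟨i, b⟩ hp ⟨j, c⟩ hq (rfl : i = j)
    obtain ⟨_, h2⟩ := hM _ hp
    obtain ⟨_, h3⟩ := hM _ hq
    exact Prod.ext rfl (Sum.inl_injective (h2.symm.trans h3))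
  · rintro ⟨i, b⟩ hp ⟨j, c⟩ hq (rfl : b = c)
    obtain ⟨_, h2⟩ := hM _ hp
    obtain ⟨_, h3⟩ := hM _ hq
    exact Prod.ext (congrArg Subtype.val (hf (h2.trans h3.symm))) rfl
  · have hsub : univ.image f ⊆ M.image (Sum.inl ∘ Prod.snd) ∪ univ.map .inr := by
      intro x hx
      obtain ⟨i, -, rfl⟩ := mem_image.mp hx
      cases hfi : f i with
      | inr k => exact mem_union_right _ (mem_map_of_mem _ (mem_univ k))
      | inl b =>
        have hb : b ∈ t i := by simpa [hfi, t'] using hft i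
        exact mem_union_left _ (mem_image.mpr ⟨(i, b), mem_filter.mpr
          ⟨mem_product.mpr ⟨i.2, mem_biUnion.mpr ⟨i, i.2, hb⟩⟩, i.2, hfi⟩, rfl⟩)
    calc #s = #(univ.image f) := by rw [card_image_of_injective _ hf, card_univ, Fintype.card_coe]
      _ ≤ #(M.image (Sum.inl ∘ Prod.snd)) + #(univ.map (.inr : Fin d ↪ β ⊕ Fin d)) :=
        (card_le_card hsub).trans (card_union_le _ _)
      _ ≤ #M + d := by grw [card_image_le]; simp

namespace FinGraph

def IsVertexCover (G : FinGraph α) (C : Finset α) : Prop :=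
  ∀ e ∈ G.edges, e.1 ∈ C ∨ e.2 ∈ C

def IsFractionalCover (G : FinGraph α) (y : α → ℝ) : Prop :=
  (∀ v ∈ G.verts, 0 ≤ y v) ∧ ∀ e ∈ G.edges, 1 ≤ y e.1 + y e.2

theorem IsMatching.card_le_nu {G : FinGraph α} {M : Finset (α × α)} (hM : G.IsMatching M) :
    #M ≤ G.nu := by
  classical
  exact le_sup (f := card) (mem_filter.2 ⟨mem_powerset.2 hM.1, hM⟩)

theorem exists_isMatching_card_eq_nu (G : FinGraph α) : ∃ M, G.IsMatching M ∧ #M = G.nu := by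
  classical
  obtain ⟨M, hM, hcard⟩ := exists_mem_eq_sup (G.edges.powerset.filter G.IsMatching)
    ⟨∅, by simp [IsMatching]⟩ card
  exact ⟨M, (mem_filter.mp hM).2, hcard.symm⟩

theorem IsFractionalCover.nu_le_sum {G : FinGraph α} (hWF : G.WF) {y : α → ℝ}
    (hy : G.IsFractionalCover y) : (G.nu : ℝ) ≤ ∑ v ∈ G.verts, y v := by
  classical
  obtain ⟨M, hM, hcard⟩ := G.exists_isMatching_card_eq_nu
  have hdisj : (M : Set (α × α)).PairwiseDisjoint fun e => ({e.1, e.2} : Finset α) := by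
    intro e he f hf hne
    have := hM.2 e he f hf hne
    simp only [Function.onFun, disjoint_insert_left, disjoint_insert_right, disjoint_singleton,
      mem_insert, mem_singleton]
    tauto
  have hsub : M.biUnion (fun e => {e.1, e.2}) ⊆ G.verts := by
    simp only [biUnion_subset, insert_subset_iff, singleton_subset_iff]
    exact fun e he => ⟨(hWF e (hM.1 he)).1, (hWF e (hM.1 he)).2.1⟩
  calc (G.nu : ℝ) = ∑ _e ∈ M, 1 := by simp [hcard]
    _ ≤ ∑ e ∈ M, (y e.1 + y e.2) := sum_le_sum fun e he => hy.2 e (hM.1 he)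
    _ = ∑ v ∈ M.biUnion (fun e => {e.1, e.2}), y v := by
      rw [sum_biUnion hdisj]
      exact sum_congr rfl fun e he => (sum_pair (hWF e (hM.1 he)).2.2).symm
    _ ≤ ∑ v ∈ G.verts, y v := sum_le_sum_of_subset_of_nonneg hsub fun v hv _ => hy.1 v hv

theorem IsFractionalCover.min_one {G : FinGraph α} (hWF : G.WF) {y : α → ℝ}
    (hy : G.IsFractionalCover y) : G.IsFractionalCover fun v => min (y v) 1 := by
  refine ⟨fun v hv => le_min (hy.1 v hv) zero_le_one, fun e he => ?_⟩
  have h1 := hy.1 _ (hWF e he).1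
  have h2 := hy.1 _ (hWF e he).2.1
  have h := hy.2 e he
  rcases le_total (y e.1) 1 with h1' | h1' <;> rcases le_total (y e.2) 1 with h2' | h2' <;>
    simp only [min_eq_left, min_eq_right, *] <;> linarith

variable [DecidableEq α]

def outNbrs (G : FinGraph α) (v : α) : Finset α :=
  (G.edges.filter (·.1 = v)).image Prod.snd

theorem mem_outNbrs {G : FinGraph α} {v w : α} : w ∈ G.outNbrs v ↔ (v, w) ∈ G.edges := by
  simp [outNbrs]

theorem isMatching_of_injOn {G : FinGraph α} {V1 V2 : Finset α} (hdisj : Disjoint V1 V2)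
    (hbip : G.Bipartition V1 V2) {M : Finset (α × α)} (hM : M ⊆ G.edges)
    (hfst : Set.InjOn Prod.fst (M : Set (α × α))) (hsnd : Set.InjOn Prod.snd (M : Set (α × α))) :
    G.IsMatching M := by
  refine ⟨hM, fun e he f hf hne =>
    ⟨fun h => hne (hfst he hf h), fun h => ?_, fun h => ?_, fun h => hne (hsnd he hf h)⟩⟩
  · exact disjoint_left.mp hdisj (hbip.2 e (hM he)).1 (h ▸ (hbip.2 f (hM hf)).2)
  · exact disjoint_left.mp hdisj (hbip.2 f (hM hf)).1 (h ▸ (hbip.2 e (hM he)).2)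

theorem exists_isVertexCover_card_le_nu {G : FinGraph α} {V1 V2 : Finset α}
    (hdisj : Disjoint V1 V2) (hbip : G.Bipartition V1 V2) :
    ∃ C : Finset α, G.IsVertexCover C ∧ #C ≤ G.nu := by
  -- `A₀ ⊆ L` has maximal deficiency `d = #A₀ - #N(A₀)`: Hall with defect `d` gives a matching
  -- of size `#L - d`, and `(L \ A₀) ∪ N(A₀)` is a vertex cover of that size.
  set L := G.edges.image Prod.fst
  obtain ⟨A₀, hA₀L, hA₀⟩ := L.powerset.exists_max_image
    (fun A => (#A : ℤ) - #(A.biUnion G.outNbrs)) ⟨∅, empty_mem_powerset _⟩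
  rw [mem_powerset] at hA₀L
  set d := #A₀ - #(A₀.biUnion G.outNbrs)
  have hd : (#A₀ : ℤ) - #(A₀.biUnion G.outNbrs) = d := by
    have := hA₀ ∅ (empty_mem_powerset _)
    simp only [card_empty, biUnion_empty, CharP.cast_eq_zero, sub_self] at this
    omega
  obtain ⟨M, hML, hfst, hsnd, hMcard⟩ := L.exists_matching_of_card_le_card_biUnion_add
    G.outNbrs d fun A hA => by have := hA₀ A (mem_powerset.2 hA); omega
  have hM : G.IsMatching M :=
    isMatching_of_injOn hdisj hbip (fun p hp => mem_outNbrs.1 (hML p hp).2) hfst hsnd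
  refine ⟨(L \ A₀) ∪ A₀.biUnion G.outNbrs, fun e he => ?_, ?_⟩
  · by_cases h : e.1 ∈ A₀
    · exact .inr (mem_union_right _ (mem_biUnion.2 ⟨e.1, h, mem_outNbrs.2 he⟩))
    · exact .inl (mem_union_left _ (mem_sdiff.2 ⟨mem_image_of_mem _ he, h⟩))
  · have := hM.card_le_nu
    have := card_le_card hA₀L
    calc #(L \ A₀ ∪ A₀.biUnion G.outNbrs) ≤ #(L \ A₀) + #(A₀.biUnion G.outNbrs) :=
          card_union_le _ _
      _ ≤ G.nu := by rw [card_sdiff_of_subset hA₀L]; omega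

theorem exists_mem_core_forall_mem_Icc {G : FinGraph α} {V1 V2 : Finset α}
    (hdisj : Disjoint V1 V2) (hWF : G.WF) (hbip : G.Bipartition V1 V2) :
    ∃ y ∈ G.core, ∀ v, y v ∈ Set.Icc (0 : ℝ) 1 := by
  obtain ⟨C, hC, hCcard⟩ := exists_isVertexCover_card_le_nu hdisj hbip
  set y : α → ℝ := fun v => if v ∈ C then 1 else 0
  have hy01 : ∀ v, y v ∈ Set.Icc (0 : ℝ) 1 := fun v => by by_cases h : v ∈ C <;> simp [y, h]
  have hy : G.IsFractionalCover y := by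
    refine ⟨fun v _ => (hy01 v).1, fun e he => ?_⟩
    rcases hC e he with h | h
    · linarith [(hy01 e.2).1, show y e.1 = 1 from if_pos h]
    · linarith [(hy01 e.1).1, show y e.2 = 1 from if_pos h]
  refine ⟨y, ⟨hy.1, hy.2, le_antisymm ?_ (hy.nu_le_sum hWF)⟩, hy01⟩
  calc ∑ v ∈ G.verts, y v = #(G.verts ∩ C) := by simp [y, sum_ite_mem]
    _ ≤ G.nu := by exact_mod_cast (card_le_card inter_subset_right).trans hCcard

end FinGraph

theorem IntegralReal.add {x y : ℝ} (hx : IntegralReal x) (hy : IntegralReal y) :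
    IntegralReal (x + y) := by
  obtain ⟨m, rfl⟩ := hx
  obtain ⟨n, rfl⟩ := hy
  exact ⟨m + n, by push_cast; ring⟩

theorem IntegralReal.sum {ι : Type*} {s : Finset ι} {f : ι → ℝ}
    (h : ∀ i ∈ s, IntegralReal (f i)) : IntegralReal (∑ i ∈ s, f i) :=
  sum_induction f IntegralReal (fun _ _ => IntegralReal.add) ⟨0, by simp⟩ h

theorem IntegralReal.natCast (n : ℕ) : IntegralReal n := ⟨n, by simp⟩

theorem IntegralReal.eq_of_le_of_lt_add_one {x y : ℝ} (hx : IntegralReal x) (hy : IntegralReal y)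
    (hle : y ≤ x) (hlt : x < y + 1) : x = y := by
  obtain ⟨m, rfl⟩ := hx
  obtain ⟨n, rfl⟩ := hy
  have : n ≤ m := by exact_mod_cast hle
  have : m < n + 1 := by exact_mod_cast hlt
  have : m = n := by omega
  rw [this]

theorem pos_and_mul_lt_one_of_eq_one_div_one_add {ε K : ℝ} (hK : 0 ≤ K)
    (hε : ε = 1 / (1 + K)) : 0 < ε ∧ ε * K < 1 := by
  subst hε
  exact ⟨by positivity, by rw [one_div, inv_mul_lt_iff₀ (by positivity)]; linarith⟩

theorem min_sub_min_le_of_sub_le {x y δ : ℝ} (c : ℝ) (h : x - y ≤ δ) (hδ : 0 ≤ δ) :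
    min x c - min y c ≤ δ := by
  have := min_le_min (show x ≤ y + δ by linarith) (show c ≤ c + δ by linarith)
  rw [min_add_add_right] at this
  linarith

section TwoStage

variable [DecidableEq α] {G0 : FinGraph α} {G : σ → FinGraph α}

theorem isFractionalCover_fst_of_mem_regionD {p : TwoStagePt α σ} (hp : p ∈ regionD G0 G) :
    G0.IsFractionalCover p.1 :=
  ⟨hp.1, hp.2.1⟩

theorem isFractionalCover_snd_of_mem_regionD {p : TwoStagePt α σ} (hp : p ∈ regionD G0 G)
    (s : σ) : (G s).IsFractionalCover (p.2.1 s) :=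
  hp.2.2.1 s

def truncate (p : TwoStagePt α σ) : TwoStagePt α σ :=
  (fun v => min (p.1 v) 1, fun s v => min (p.2.1 s v) 1, p.2.2.1, p.2.2.2)

theorem truncate_mem_regionD (hWF0 : G0.WF) (hWFs : ∀ s, (G s).WF) {p : TwoStagePt α σ}
    (hp : p ∈ regionD G0 G) : truncate p ∈ regionD G0 G := by
  obtain ⟨h0, h0'⟩ := (isFractionalCover_fst_of_mem_regionD hp).min_one hWF0
  refine ⟨h0, h0', fun s => (isFractionalCover_snd_of_mem_regionD hp s).min_one (hWFs s),
    fun s v hv => ?_⟩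
  obtain ⟨hδ, hd, hδ0, hd0⟩ := hp.2.2.2 s v hv
  exact ⟨min_sub_min_le_of_sub_le 1 hδ hδ0, min_sub_min_le_of_sub_le 1 hd hd0, hδ0, hd0⟩

variable [Fintype σ]

variable (G0 G) in
def coverSum (p : TwoStagePt α σ) : ℝ :=
  ∑ v ∈ G0.verts, p.1 v + ∑ s : σ, ∑ v ∈ (G s).verts, p.2.1 s v

variable (G0 G) in
def objBound (a : α → ℝ) (aS β b : σ → α → ℝ) : ℝ :=
  ∑ v ∈ G0.verts, |a v| + ∑ s : σ, ∑ v ∈ (G s).verts, |aS s v|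
    + ∑ s : σ, ∑ v ∈ G0.verts ∩ (G s).verts, (β s v + b s v)

theorem coverSum_add_mul_objC (ε : ℝ) (a : α → ℝ) (aS β b : σ → α → ℝ) (p : TwoStagePt α σ) :
    coverSum G0 G p + ε * objC G0 G a aS β b p =
      objC G0 G (fun v => 1 + ε * a v) (fun s v => 1 + ε * aS s v)
        (fun s v => ε * β s v) (fun s v => ε * b s v) p := by
  simp only [coverSum, objC, add_mul, one_mul, mul_assoc, mul_add, sum_add_distrib, mul_sum]
  ring

theorem le_one_of_isMinOn_objC (hWF0 : G0.WF) (hWFs : ∀ s, (G s).WF) {cy : α → ℝ}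
    {cyS cδ cd : σ → α → ℝ} (hcy : ∀ v ∈ G0.verts, 0 < cy v)
    (hcyS : ∀ s, ∀ v ∈ (G s).verts, 0 < cyS s v) {μ : TwoStagePt α σ} (hμ : μ ∈ regionD G0 G)
    (hmin : IsMinOn (objC G0 G cy cyS cδ cd) (regionD G0 G) μ) :
    (∀ v ∈ G0.verts, μ.1 v ≤ 1) ∧ ∀ s, ∀ v ∈ (G s).verts, μ.2.1 s v ≤ 1 := by
  -- truncating at `1` keeps `μ` in `D` and lowers each term `c * y` with `y > 1`
  set excess : ℝ → ℝ → ℝ := fun c x => c * (x - min x 1)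
  have hexcess : ∀ c x, 0 < c → 0 ≤ excess c x := fun c x hc =>
    mul_nonneg hc.le (sub_nonneg.2 (min_le_left _ _))
  have hle_one : ∀ c x, 0 < c → excess c x ≤ 0 → x ≤ 1 := fun c x hc h => by
    linarith [min_le_right x 1, nonpos_of_mul_nonpos_right h hc]
  have hdiff : objC G0 G cy cyS cδ cd μ - objC G0 G cy cyS cδ cd (truncate μ) =
      ∑ v ∈ G0.verts, excess (cy v) (μ.1 v)
        + ∑ s : σ, ∑ v ∈ (G s).verts, excess (cyS s v) (μ.2.1 s v) := by
    simp only [objC, truncate, excess, mul_sub, sum_sub_distrib]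
    ring
  have hle := isMinOn_iff.mp hmin _ (truncate_mem_regionD hWF0 hWFs hμ)
  have h0 : 0 ≤ ∑ v ∈ G0.verts, excess (cy v) (μ.1 v) :=
    sum_nonneg fun v hv => hexcess _ _ (hcy v hv)
  have hS : ∀ s, 0 ≤ ∑ v ∈ (G s).verts, excess (cyS s v) (μ.2.1 s v) := fun s =>
    sum_nonneg fun v hv => hexcess _ _ (hcyS s v hv)
  have hS' := sum_nonneg fun s (_ : s ∈ univ) => hS s
  refine ⟨fun v hv => hle_one _ _ (hcy v hv) ?_, fun s v hv => hle_one _ _ (hcyS s v hv) ?_⟩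
  · have := single_le_sum (f := fun w => excess (cy w) (μ.1 w))
      (fun w hw => hexcess _ _ (hcy w hw)) hv
    linarith
  · have h1 := single_le_sum (f := fun w => excess (cyS s w) (μ.2.1 s w))
      (fun w hw => hexcess _ _ (hcyS s w hw)) hv
    have h2 := single_le_sum (f := fun t => ∑ w ∈ (G t).verts, excess (cyS t w) (μ.2.1 t w))
      (fun t _ => hS t) (mem_univ s)
    linarith

section Bound

variable {a : α → ℝ} {aS β b : σ → α → ℝ}
  (hβ : ∀ s, ∀ v ∈ G0.verts ∩ (G s).verts, 0 ≤ β s v)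
  (hb : ∀ s, ∀ v ∈ G0.verts ∩ (G s).verts, 0 ≤ b s v)
include hβ hb

theorem objBound_nonneg : 0 ≤ objBound G0 G a aS β b :=
  add_nonneg (add_nonneg (sum_nonneg fun _ _ => abs_nonneg _)
    (sum_nonneg fun _ _ => sum_nonneg fun _ _ => abs_nonneg _))
    (sum_nonneg fun s _ => sum_nonneg fun v hv => add_nonneg (hβ s v hv) (hb s v hv))

theorem abs_le_objBound_fst {v : α} (hv : v ∈ G0.verts) : |a v| ≤ objBound G0 G a aS β b := by
  have h1 := single_le_sum (f := fun w => |a w|) (fun _ _ => abs_nonneg _) hv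
  have h2 : 0 ≤ ∑ s : σ, ∑ v ∈ (G s).verts, |aS s v| :=
    sum_nonneg fun _ _ => sum_nonneg fun _ _ => abs_nonneg _
  have h3 : 0 ≤ ∑ s : σ, ∑ v ∈ G0.verts ∩ (G s).verts, (β s v + b s v) :=
    sum_nonneg fun s _ => sum_nonneg fun v hv => add_nonneg (hβ s v hv) (hb s v hv)
  simp only [objBound] at *
  linarith

theorem abs_le_objBound_snd {s : σ} {v : α} (hv : v ∈ (G s).verts) :
    |aS s v| ≤ objBound G0 G a aS β b := by
  have h1 := single_le_sum (f := fun w => |aS s w|) (fun _ _ => abs_nonneg _) hv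
  have h2 := single_le_sum (f := fun t => ∑ w ∈ (G t).verts, |aS t w|)
    (fun _ _ => sum_nonneg fun _ _ => abs_nonneg _) (mem_univ s)
  have h3 : 0 ≤ ∑ v ∈ G0.verts, |a v| := sum_nonneg fun _ _ => abs_nonneg _
  have h4 : 0 ≤ ∑ s : σ, ∑ v ∈ G0.verts ∩ (G s).verts, (β s v + b s v) :=
    sum_nonneg fun s _ => sum_nonneg fun v hv => add_nonneg (hβ s v hv) (hb s v hv)
  simp only [objBound] at *
  linarith

theorem objC_sub_objC_le_objBound {p q : TwoStagePt α σ}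
    (h1 : ∀ v ∈ G0.verts, |p.1 v - q.1 v| ≤ 1)
    (h2 : ∀ s, ∀ v ∈ (G s).verts, |p.2.1 s v - q.2.1 s v| ≤ 1)
    (h3 : ∀ s, ∀ v ∈ G0.verts ∩ (G s).verts,
      p.2.2.1 s v - q.2.2.1 s v ≤ 1 ∧ p.2.2.2 s v - q.2.2.2 s v ≤ 1) :
    objC G0 G a aS β b p - objC G0 G a aS β b q ≤ objBound G0 G a aS β b := by
  have habs : ∀ c x y : ℝ, |x - y| ≤ 1 → c * x - c * y ≤ |c| := fun c x y h =>
    calc c * x - c * y ≤ |c * (x - y)| := by rw [mul_sub]; exact le_abs_self _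
      _ = |c| * |x - y| := abs_mul _ _
      _ ≤ |c| := mul_le_of_le_one_right (abs_nonneg c) h
  have hpos : ∀ c x y : ℝ, 0 ≤ c → x - y ≤ 1 → c * x - c * y ≤ c := fun c x y hc h => by
    rw [← mul_sub]
    exact mul_le_of_le_one_right hc h
  calc objC G0 G a aS β b p - objC G0 G a aS β b q
      = ∑ v ∈ G0.verts, (a v * p.1 v - a v * q.1 v)
        + ∑ s : σ, ∑ v ∈ (G s).verts, (aS s v * p.2.1 s v - aS s v * q.2.1 s v)
        + ∑ s : σ, ∑ v ∈ G0.verts ∩ (G s).verts,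
            ((β s v * p.2.2.1 s v - β s v * q.2.2.1 s v)
              + (b s v * p.2.2.2 s v - b s v * q.2.2.2 s v)) := by
        simp only [objC, sum_sub_distrib, sum_add_distrib]
        ring
    _ ≤ objBound G0 G a aS β b :=
      add_le_add (add_le_add (sum_le_sum fun v hv => habs _ _ _ (h1 v hv))
        (sum_le_sum fun s _ => sum_le_sum fun v hv => habs _ _ _ (h2 s v hv)))
        (sum_le_sum fun s _ => sum_le_sum fun v hv => add_le_add
          (hpos _ _ _ (hβ s v hv) (h3 s v hv).1) (hpos _ _ _ (hb s v hv) (h3 s v hv).2))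

theorem exists_mem_regionD_coverSum_eq_objC_sub_le {V1 V2 : Finset α} (hdisj : Disjoint V1 V2)
    (hWF0 : G0.WF) (hWFs : ∀ s, (G s).WF)
    (hbip0 : G0.Bipartition V1 V2) (hbips : ∀ s, (G s).Bipartition V1 V2)
    {μ : TwoStagePt α σ} (hμ : μ ∈ regionD G0 G)
    (hμ0 : ∀ v ∈ G0.verts, μ.1 v ≤ 1) (hμS : ∀ s, ∀ v ∈ (G s).verts, μ.2.1 s v ≤ 1) :
    ∃ q ∈ regionD G0 G, coverSum G0 G q = G0.nu + ∑ s, ((G s).nu : ℝ) ∧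
      objC G0 G a aS β b q - objC G0 G a aS β b μ ≤ objBound G0 G a aS β b := by
  obtain ⟨y0, hy0, hy0I⟩ := G0.exists_mem_core_forall_mem_Icc hdisj hWF0 hbip0
  choose yS hyS hySI using fun s => (G s).exists_mem_core_forall_mem_Icc hdisj (hWFs s) (hbips s)
  have hunit : ∀ {x y : ℝ}, x ∈ Set.Icc 0 1 → 0 ≤ y → y ≤ 1 → |x - y| ≤ 1 := fun hx h0 h1 =>
    abs_sub_le_iff.2 ⟨by linarith [hx.2], by linarith [hx.1]⟩
  refine ⟨(y0, yS, 1, 1), ⟨hy0.1, hy0.2.1, fun s => ⟨(hyS s).1, (hyS s).2.1⟩, fun s v _ => ?_⟩,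
    ?_, objC_sub_objC_le_objBound hβ hb (fun v hv => hunit (hy0I v) (hμ.1 v hv) (hμ0 v hv))
    (fun s v hv => hunit (hySI s v) ((isFractionalCover_snd_of_mem_regionD hμ s).1 v hv) (hμS s v hv)) fun s v hv => ?_⟩
  · simp only [Pi.one_apply]
    exact ⟨by linarith [(hy0I v).2, (hySI s v).1], by linarith [(hy0I v).1, (hySI s v).2],
      zero_le_one, zero_le_one⟩
  · simp only [coverSum, hy0.2.2, (hyS _).2.2]
  · obtain ⟨-, -, hδ, hd⟩ := hμ.2.2.2 s v hv
    simp only [Pi.one_apply]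
    constructor <;> linarith

end Bound

theorem sum_eq_nu_of_coverSum_lt (hWF0 : G0.WF) (hWFs : ∀ s, (G s).WF) {p : TwoStagePt α σ}
    (hp : p ∈ regionD G0 G) (hint1 : ∀ v ∈ G0.verts, IntegralReal (p.1 v))
    (hint2 : ∀ s, ∀ v ∈ (G s).verts, IntegralReal (p.2.1 s v))
    (hlt : coverSum G0 G p < G0.nu + ∑ s, ((G s).nu : ℝ) + 1) :
    ∑ v ∈ G0.verts, p.1 v = G0.nu ∧ ∀ s, ∑ v ∈ (G s).verts, p.2.1 s v = (G s).nu := by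
  have h0 := (isFractionalCover_fst_of_mem_regionD hp).nu_le_sum hWF0
  have hS := fun s => (isFractionalCover_snd_of_mem_regionD hp s).nu_le_sum (hWFs s)
  have hS' := sum_le_sum fun s (_ : s ∈ univ) => hS s
  have heq : coverSum G0 G p = G0.nu + ∑ s, ((G s).nu : ℝ) :=
    IntegralReal.eq_of_le_of_lt_add_one
      ((IntegralReal.sum hint1).add (IntegralReal.sum fun s _ => IntegralReal.sum (hint2 s)))
      ((IntegralReal.natCast _).add (IntegralReal.sum fun _ _ => IntegralReal.natCast _))
      (by simp only [coverSum]; linarith) hlt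
  simp only [coverSum] at heq
  have hsum : ∑ s, ((G s).nu : ℝ) = ∑ s, ∑ v ∈ (G s).verts, p.2.1 s v := by linarith
  exact ⟨by linarith, fun s => ((sum_eq_sum_iff_of_le fun s _ => hS s).1 hsum s (mem_univ s)).symm⟩

end TwoStage

theorem integral_minimizer_regionD_minimizes_regionP_general [DecidableEq α] [Fintype σ]
    (G0 : FinGraph α) (G : σ → FinGraph α) (V1 V2 : Finset α)
    (hdisj : Disjoint V1 V2)
    (hWF0 : G0.WF) (hWFs : ∀ s : σ, (G s).WF)
    (hbip0 : G0.Bipartition V1 V2) (hbips : ∀ s : σ, (G s).Bipartition V1 V2)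
    (a : α → ℝ) (aS β b : σ → α → ℝ)
    (hβ : ∀ s : σ, ∀ v ∈ G0.verts ∩ (G s).verts, 0 ≤ β s v)
    (hb : ∀ s : σ, ∀ v ∈ G0.verts ∩ (G s).verts, 0 ≤ b s v)
    (ε : ℝ)
    (hε : ε = 1 / (1 + ∑ v ∈ G0.verts, |a v|
        + ∑ s : σ, ∑ v ∈ (G s).verts, |aS s v|
        + ∑ s : σ, ∑ v ∈ G0.verts ∩ (G s).verts, (β s v + b s v)))
    (μ : TwoStagePt α σ)
    (hint1 : ∀ v ∈ G0.verts, IntegralReal (μ.1 v))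
    (hint2 : ∀ s : σ, ∀ v ∈ (G s).verts, IntegralReal (μ.2.1 s v))
    (hmem : μ ∈ regionD G0 G)
    (hmin : ∀ p ∈ regionD G0 G,
        (∑ v ∈ G0.verts, μ.1 v) + (∑ s : σ, ∑ v ∈ (G s).verts, μ.2.1 s v)
            + ε * objC G0 G a aS β b μ ≤
          (∑ v ∈ G0.verts, p.1 v) + (∑ s : σ, ∑ v ∈ (G s).verts, p.2.1 s v)
            + ε * objC G0 G a aS β b p) :
    (∑ v ∈ G0.verts, μ.1 v = (G0.nu : ℝ)) ∧
    (∀ s : σ, ∑ v ∈ (G s).verts, μ.2.1 s v = ((G s).nu : ℝ)) ∧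
    μ ∈ regionP G0 G ∧
    ∀ p ∈ regionP G0 G, objC G0 G a aS β b μ ≤ objC G0 G a aS β b p := by
  set K := objBound G0 G a aS β b
  have hK : 0 ≤ K := objBound_nonneg hβ hb
  have hεK : ε = 1 / (1 + K) := by rw [hε]; simp only [K, objBound]; ring
  obtain ⟨hε0, hεK1⟩ := pos_and_mul_lt_one_of_eq_one_div_one_add hK hεK
  have hcoef : ∀ c, |c| ≤ K → 0 < 1 + ε * c := fun c hc => by
    nlinarith [neg_abs_le c, mul_le_mul_of_nonneg_left hc hε0.le]
  have hminF : IsMinOn (objC G0 G (fun v => 1 + ε * a v) (fun s v => 1 + ε * aS s v)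
      (fun s v => ε * β s v) (fun s v => ε * b s v)) (regionD G0 G) μ :=
    isMinOn_iff.2 fun p hp => by
      rw [← coverSum_add_mul_objC, ← coverSum_add_mul_objC]
      exact hmin p hp
  obtain ⟨hμ0, hμS⟩ := le_one_of_isMinOn_objC hWF0 hWFs
    (fun v hv => hcoef _ (abs_le_objBound_fst hβ hb hv))
    (fun s v hv => hcoef _ (abs_le_objBound_snd hβ hb hv)) hmem hminF
  obtain ⟨q, hq, hqsum, hgap⟩ := exists_mem_regionD_coverSum_eq_objC_sub_le hβ hb hdisj hWF0 hWFs
    hbip0 hbips hmem hμ0 hμS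
  have hlt : coverSum G0 G μ < G0.nu + ∑ s, ((G s).nu : ℝ) + 1 := by
    have := hmin q hq
    have := mul_le_mul_of_nonneg_left hgap hε0.le
    rw [mul_sub] at this
    simp only [coverSum] at hqsum ⊢
    linarith
  obtain ⟨heq0, heqS⟩ := sum_eq_nu_of_coverSum_lt hWF0 hWFs hmem hint1 hint2 hlt
  refine ⟨heq0, heqS, ⟨hmem, heq0, heqS⟩, fun p ⟨hpD, hp0, hpS⟩ => ?_⟩
  have := hmin p hpD
  simp only [heq0, heqS, hp0, hpS] at this
  exact le_of_mul_le_mul_left (by linarith) hε0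

/-- Let `a, a^S` be arbitrary and `β^S, b^S` nonnegative coefficient vectors,
and let `ε = 1/(1 + Σ|a| + ΣΣ|a^S| + ΣΣ(β^S + b^S))`.  If `μ̂` is an integral minimizer over the
region `D` of the objective
`F_ε(μ) = Σ_{V₀} y + Σ_S Σ_{V_S} y^S + ε·(Σ a y + Σ_S Σ a^S y^S + Σ_S Σ (β^S δ^S + b^S d^S))`,
then `μ̂` satisfies the matching-number equalities (hence `μ̂ ∈ P`) and minimizes
`G(μ) = Σ a y + Σ_S Σ a^S y^S + Σ_S Σ (β^S δ^S + b^S d^S)` over `P`. -/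
theorem integral_minimizer_regionD_minimizes_regionP [DecidableEq α] [Fintype σ]
    (G0 : FinGraph α) (G : σ → FinGraph α) (V1 V2 : Finset α)
    (hdisj : Disjoint V1 V2)
    (hWF0 : G0.WF) (hWFs : ∀ s : σ, (G s).WF)
    (hbip0 : G0.Bipartition V1 V2) (hbips : ∀ s : σ, (G s).Bipartition V1 V2)
    (a : α → ℝ) (aS β b : σ → α → ℝ)
    (hβ : ∀ s : σ, ∀ v ∈ G0.verts ∩ (G s).verts, 0 ≤ β s v)
    (hb : ∀ s : σ, ∀ v ∈ G0.verts ∩ (G s).verts, 0 ≤ b s v)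
    (ε : ℝ)
    (hε : ε = 1 / (1 + ∑ v ∈ G0.verts, |a v|
        + ∑ s : σ, ∑ v ∈ (G s).verts, |aS s v|
        + ∑ s : σ, ∑ v ∈ G0.verts ∩ (G s).verts, (β s v + b s v)))
    (μ : TwoStagePt α σ)
    (hint1 : ∀ v ∈ G0.verts, IntegralReal (μ.1 v))
    (hint2 : ∀ s : σ, ∀ v ∈ (G s).verts, IntegralReal (μ.2.1 s v))
    (hint3 : ∀ s : σ, ∀ v ∈ G0.verts ∩ (G s).verts,
        IntegralReal (μ.2.2.1 s v) ∧ IntegralReal (μ.2.2.2 s v))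
    (hmem : μ ∈ regionD G0 G)
    (hmin : ∀ p ∈ regionD G0 G,
        (∑ v ∈ G0.verts, μ.1 v) + (∑ s : σ, ∑ v ∈ (G s).verts, μ.2.1 s v)
            + ε * objC G0 G a aS β b μ ≤
          (∑ v ∈ G0.verts, p.1 v) + (∑ s : σ, ∑ v ∈ (G s).verts, p.2.1 s v)
            + ε * objC G0 G a aS β b p) :
    (∑ v ∈ G0.verts, μ.1 v = (G0.nu : ℝ)) ∧
    (∀ s : σ, ∑ v ∈ (G s).verts, μ.2.1 s v = ((G s).nu : ℝ)) ∧
    μ ∈ regionP G0 G ∧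
    ∀ p ∈ regionP G0 G, objC G0 G a aS β b μ ≤ objC G0 G a aS β b p :=
  integral_minimizer_regionD_minimizes_regionP_general G0 G V1 V2 hdisj hWF0 hWFs hbip0 hbips a aS β
    b hβ hb ε hε μ hint1 hint2 hmem hmin
end
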